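/- Let f : M(n,ℝ) → ℝ be f(A) = n + tr(AᵀA) − 2·tr(√(AᵀA)) (the squared Frobenius distance to O(n,ℝ)), which is smooth on the invertible matrices. For every A ∈ O(n,ℝ) and all symmetric matrices W, W′, the Hessian (second derivative) of f at A evaluated on the pair of normal directions (AW, AW′) equals 2·tr((AW)ᵀ(AW′)); equivalently, Hess(f)_A restricted to the normal space {AW : Wᵀ = W} of O(n,ℝ) at A is twice the Frobenius inner product. -/

import Mathlib

open Matrix

attribute [local instance] Matrix.normedAddCommGroup Matrix.normedSpace

open scoped Classical in
/-- The unique positive semidefinite square root of a positive semidefinite real matrix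
(junk value `0` on matrices that are not positive semidefinite). -/
noncomputable def psdSqrt {n : ℕ} (X : Matrix (Fin n) (Fin n) ℝ) : Matrix (Fin n) (Fin n) ℝ :=
  if h : X.PosSemidef then
    (h.1.eigenvectorUnitary : Matrix (Fin n) (Fin n) ℝ) *
      diagonal ((↑) ∘ Real.sqrt ∘ h.1.eigenvalues) *
      (star h.1.eigenvectorUnitary : Matrix (Fin n) (Fin n) ℝ)
  else 0


variable {n : ℕ}
local notation "E" => Matrix (Fin n) (Fin n) ℝ


noncomputable def mulCLM : E →L[ℝ] E →L[ℝ] E :=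
  LinearMap.toContinuousLinearMap
  { toFun := fun A => LinearMap.toContinuousLinearMap (LinearMap.mulLeft ℝ A)
    map_add' := fun A B => by ext X; simp [add_mul]
    map_smul' := fun c A => by ext X; simp [smul_mul_assoc] }

lemma isBBM_mul :
    IsBoundedBilinearMap ℝ (fun p : E × E => p.1 * p.2) :=
  (mulCLM (n := n)).isBoundedBilinearMap

lemma contDiff_mul2 : ContDiff ℝ (⊤ : ℕ∞) (fun p : E × E => p.1 * p.2) :=
  isBBM_mul.contDiff

noncomputable def transposeCLM : E →L[ℝ] E :=
  LinearMap.toContinuousLinearMap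
  { toFun := fun A => Aᵀ
    map_add' := fun A B => Matrix.transpose_add A B
    map_smul' := fun c A => Matrix.transpose_smul c A }

noncomputable def traceCLM : E →L[ℝ] ℝ :=
  LinearMap.toContinuousLinearMap (Matrix.traceLinearMap (Fin n) ℝ ℝ)

lemma dot_self_pos {x : Fin n → ℝ} (hx : x ≠ 0) : 0 < x ⬝ᵥ x := by
  obtain ⟨i, hi⟩ := Function.ne_iff.mp hx
  refine Finset.sum_pos' (fun j _ => mul_self_nonneg _) ⟨i, Finset.mem_univ i, ?_⟩
  exact mul_self_pos.mpr hi

lemma quad_bound (M : E) (x : Fin n → ℝ) : |x ⬝ᵥ M *ᵥ x| ≤ (n * ‖M‖) * (x ⬝ᵥ x) := by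
  have h1 : |x ⬝ᵥ M *ᵥ x| ≤ ∑ i, ∑ j, |x i| * (‖M‖ * |x j|) := by
    calc |x ⬝ᵥ M *ᵥ x| = |∑ i, x i * ∑ j, M i j * x j| := by
          simp [dotProduct, mulVec, Finset.mul_sum]
      _ ≤ ∑ i, |x i * ∑ j, M i j * x j| := Finset.abs_sum_le_sum_abs _ _
      _ ≤ ∑ i, ∑ j, |x i| * (‖M‖ * |x j|) := by
          refine Finset.sum_le_sum fun i _ => ?_
          rw [abs_mul]
          calc |x i| * |∑ j, M i j * x j| ≤ |x i| * ∑ j, ‖M‖ * |x j| := by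
                refine mul_le_mul_of_nonneg_left ?_ (abs_nonneg _)
                refine (Finset.abs_sum_le_sum_abs _ _).trans ?_
                refine Finset.sum_le_sum fun j _ => ?_
                rw [abs_mul]
                exact mul_le_mul_of_nonneg_right
                  (M.norm_entry_le_entrywise_sup_norm (i := i) (j := j)) (abs_nonneg _)
            _ = ∑ j, |x i| * (‖M‖ * |x j|) := by rw [Finset.mul_sum]
  have h2 : ∑ i, ∑ j, |x i| * (‖M‖ * |x j|) = ‖M‖ * (∑ i, |x i|) ^ 2 := by
    symm
    rw [pow_two, Finset.sum_mul_sum, Finset.mul_sum]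
    refine Finset.sum_congr rfl fun i _ => ?_
    rw [Finset.mul_sum]
    exact Finset.sum_congr rfl fun j _ => by ring
  have h3 : (∑ i, |x i|) ^ 2 ≤ (n : ℝ) * ∑ i, x i * x i := by
    have := sq_sum_le_card_mul_sum_sq (s := Finset.univ) (f := fun i => |x i|)
    simpa [sq_abs, pow_two] using this
  have h4 : x ⬝ᵥ x = ∑ i, x i * x i := rfl
  calc |x ⬝ᵥ M *ᵥ x| ≤ ‖M‖ * (∑ i, |x i|) ^ 2 := by rw [← h2]; exact h1
    _ ≤ ‖M‖ * ((n : ℝ) * ∑ i, x i * x i) :=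
        mul_le_mul_of_nonneg_left h3 (norm_nonneg _)
    _ = (n * ‖M‖) * (x ⬝ᵥ x) := by rw [h4]; ring

lemma posDef_lower {M : E} (hM : M.PosDef) :
    ∃ c > 0, ∀ x : Fin n → ℝ, c * (x ⬝ᵥ x) ≤ x ⬝ᵥ M *ᵥ x := by
  rcases Nat.eq_zero_or_pos n with hn | hn
  · refine ⟨1, one_pos, fun x => ?_⟩
    subst hn
    simp [dotProduct]
  · haveI : Nonempty (Fin n) := ⟨⟨0, hn⟩⟩
    have he := hM.1
    set lam := he.eigenvalues with hlam
    set c := Finset.univ.inf' Finset.univ_nonempty lam with hc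
    have hcpos : 0 < c := by
      rw [hc, Finset.lt_inf'_iff]
      exact fun i _ => hM.eigenvalues_pos i
    set V : E := (he.eigenvectorUnitary : E) with hV
    have hVV : V * star V = 1 := mem_unitaryGroup_iff.mp (he.eigenvectorUnitary).2
    have hsp : M = V * diagonal lam * star V := by
      simpa using he.spectral_theorem
    have hkey : M - c • 1 = V * diagonal (fun i => lam i - c) * star V := by
      have h1 : (diagonal (fun i => lam i - c) : E) = diagonal lam - c • 1 := by
        ext i j
        by_cases h : i = j
        · subst h
          simp
        · simp [Matrix.diagonal_apply_ne _ h, Matrix.one_apply_ne h]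
      rw [h1, Matrix.mul_sub, Matrix.sub_mul, ← hsp, Matrix.mul_smul, mul_one,
        Matrix.smul_mul, hVV]
    have hpsd : (M - c • 1).PosSemidef := by
      rw [hkey]
      have hd : PosSemidef (diagonal (fun i => lam i - c) : E) :=
        posSemidef_diagonal_iff.mpr fun i =>
          sub_nonneg.mpr (Finset.inf'_le _ (Finset.mem_univ i))
      simpa [Matrix.star_eq_conjTranspose] using hd.mul_mul_conjTranspose_same V
    refine ⟨c, hcpos, fun x => ?_⟩
    have h0 := hpsd.dotProduct_mulVec_nonneg x
    have hstar : star x = x := by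
      funext i; exact star_trivial _
    rw [hstar, Matrix.sub_mulVec, dotProduct_sub, smul_mulVec, one_mulVec,
      dotProduct_smul] at h0
    have : c • (x ⬝ᵥ x) = c * (x ⬝ᵥ x) := rfl
    linarith [h0]

lemma posDef_nearby {M : E} (hM : M.PosDef) :
    ∃ ε > 0, ∀ B : E, Bᵀ = B → ‖B - M‖ < ε → B.PosDef := by
  obtain ⟨c, hc, hlow⟩ := posDef_lower hM
  refine ⟨c / (n + 1), by positivity, fun B hB hdist => ?_⟩
  refine posDef_iff_dotProduct_mulVec.mpr ⟨?_, ?_⟩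
  · rw [Matrix.IsHermitian, conjTranspose_eq_transpose_of_trivial, hB]
  · intro x hx
    have hstar : star x = x := by funext i; exact star_trivial _
    rw [hstar]
    have hxx : 0 < x ⬝ᵥ x := dot_self_pos hx
    have h1 := quad_bound (B - M) x
    have h2 : x ⬝ᵥ B *ᵥ x = x ⬝ᵥ M *ᵥ x + x ⬝ᵥ (B - M) *ᵥ x := by
      rw [Matrix.sub_mulVec, dotProduct_sub]; ring
    have h3 := hlow x
    have h4 : -(((n : ℝ) * ‖B - M‖) * (x ⬝ᵥ x)) ≤ x ⬝ᵥ (B - M) *ᵥ x :=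
      neg_le_of_abs_le h1
    have h5 : (n : ℝ) * ‖B - M‖ ≤ (n : ℝ) * (c / (n + 1)) :=
      mul_le_mul_of_nonneg_left hdist.le (Nat.cast_nonneg n)
    have h6 : (n : ℝ) * (c / (n + 1)) + c / (n+1) = c := by field_simp
    nlinarith [mul_pos hxx hc, mul_le_mul_of_nonneg_right h5 hxx.le,
      mul_pos (div_pos hc (by positivity : (0:ℝ) < n + 1)) hxx]

lemma lyap_inj {S : E} (hS : S.PosDef) :
    Function.Injective (fun H : E => S * H + H * S) := by
  intro H H' hHH'
  simp only at hHH'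
  set G := H - H' with hGdef
  have hG0 : S * G + G * S = 0 := by
    have : S * G + G * S = (S * H + H * S) - (S * H' + H' * S) := by
      rw [hGdef]; noncomm_ring
    rw [this, hHH', sub_self]
  have htr : Matrix.trace (Gᵀ * (S * G)) + Matrix.trace (G * S * Gᵀ) = 0 := by
    have h1 : Gᵀ * (S * G) + Gᵀ * (G * S) = 0 := by
      rw [← Matrix.mul_add, hG0, Matrix.mul_zero]
    have h2 := congrArg Matrix.trace h1
    rw [Matrix.trace_add, Matrix.trace_zero] at h2
    have h3 : (Gᵀ * (G * S)).trace = (G * S * Gᵀ).trace := by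
      rw [Matrix.trace_mul_comm, Matrix.mul_assoc]
    rw [← h3]
    exact h2
  have hSsym : ∀ a b, S a b = S b a := by
    intro a b
    conv_lhs => rw [← hS.1]
    simp [conjTranspose_apply]
  have hcol : ∀ (A : E), Matrix.trace (Aᵀ * (S * A)) =
      ∑ j, (fun i => A i j) ⬝ᵥ S *ᵥ (fun i => A i j) := by
    intro A
    simp only [Matrix.trace, Matrix.diag, Matrix.mul_apply, Matrix.transpose_apply,
      dotProduct, mulVec]
  have hrow : Matrix.trace (G * S * Gᵀ) =
      ∑ i, (fun j => G i j) ⬝ᵥ S *ᵥ (fun j => G i j) := by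
    simp only [Matrix.trace, Matrix.diag, Matrix.mul_apply, Matrix.transpose_apply,
      dotProduct, mulVec, Finset.sum_mul, Finset.mul_sum]
    refine Finset.sum_congr rfl fun i _ => ?_
    refine Finset.sum_congr rfl fun j _ => ?_
    refine Finset.sum_congr rfl fun k _ => ?_
    rw [hSsym j k]
    ring
  have hq : ∀ x : Fin n → ℝ, 0 ≤ x ⬝ᵥ S *ᵥ x := by
    intro x
    have := hS.posSemidef.dotProduct_mulVec_nonneg x
    have hstar : star x = x := by funext i; exact star_trivial _
    rwa [hstar] at this
  have hcolz : ∀ j, (fun i => G i j) ⬝ᵥ S *ᵥ (fun i => G i j) = 0 := by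
    have hsum1 : 0 ≤ Matrix.trace (Gᵀ * (S * G)) := by
      rw [hcol]; exact Finset.sum_nonneg fun j _ => hq _
    have hsum2 : 0 ≤ Matrix.trace (G * S * Gᵀ) := by
      rw [hrow]; exact Finset.sum_nonneg fun i _ => hq _
    have hz : Matrix.trace (Gᵀ * (S * G)) = 0 := by linarith
    rw [hcol] at hz
    intro j
    exact (Finset.sum_eq_zero_iff_of_nonneg fun j _ => hq _).mp hz j (Finset.mem_univ j)
  have hGz : G = 0 := by
    ext i j
    by_contra hne
    have hxne : (fun i => G i j) ≠ 0 := by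
      intro h0
      exact hne (by simpa using congrFun h0 i)
    have := hS.dotProduct_mulVec_pos hxne
    have hstar : star (fun i => G i j) = fun i => G i j := by
      funext i; exact star_trivial _
    rw [hstar, hcolz j] at this
    exact lt_irrefl 0 this
  have := sub_eq_zero.mp hGz
  exact this

lemma posDef_ctm {X : E} (hX : IsUnit X.det) : (Xᵀ * X).PosDef := by
  have hinj : ∀ x : Fin n → ℝ, X *ᵥ x = 0 → x = 0 := by
    intro x hx
    have := congrArg (fun y => X⁻¹ *ᵥ y) hx
    simpa [Matrix.mulVec_mulVec, Matrix.nonsing_inv_mul X hX] using this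
  refine posDef_iff_dotProduct_mulVec.mpr ⟨?_, ?_⟩
  · rw [Matrix.IsHermitian, conjTranspose_eq_transpose_of_trivial, Matrix.transpose_mul,
      Matrix.transpose_transpose]
  · intro x hx
    have hstar : star x = x := by funext i; exact star_trivial _
    rw [hstar, ← Matrix.mulVec_mulVec, dotProduct_mulVec, Matrix.vecMul_transpose]
    refine dot_self_pos fun h0 => hx (hinj x h0)

open scoped MatrixOrder in
noncomputable def Matrix.PosSemidef.sqrt {Y : E} (_hY : Y.PosSemidef) : E := CFC.sqrt Y

open scoped MatrixOrder in
lemma Matrix.PosSemidef.posSemidef_sqrt {Y : E} (hY : Y.PosSemidef) : hY.sqrt.PosSemidef :=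
  (CFC.sqrt_nonneg Y).posSemidef

open scoped MatrixOrder in
lemma Matrix.PosSemidef.sqrt_mul_self {Y : E} (hY : Y.PosSemidef) : hY.sqrt * hY.sqrt = Y :=
  CFC.sqrt_mul_sqrt_self Y hY.nonneg

open scoped MatrixOrder in
lemma Matrix.PosSemidef.eq_sqrt_of_sq_eq {A : E} (hA : A.PosSemidef) {B : E}
    (hB : B.PosSemidef) (hAB : A ^ 2 = B) : A = hB.sqrt := by
  unfold Matrix.PosSemidef.sqrt
  rw [eq_comm, CFC.sqrt_eq_iff B A hB.nonneg hA.nonneg, ← pow_two, hAB]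

open scoped Classical MatrixOrder in
lemma psdSqrt_of_posSemidef {Y : E} (hY : Y.PosSemidef) : psdSqrt Y = hY.sqrt := by
  rw [psdSqrt, dif_pos hY, Matrix.PosSemidef.sqrt, CFC.sqrt_eq_real_sqrt Y hY.nonneg,
    cfcₙ_eq_cfc (hf0 := Real.sqrt_zero), hY.1.cfc_eq, IsHermitian.cfc, Unitary.conjStarAlgAut_apply]
  rfl

lemma psdSqrt_posDef {Y : E} (hY : Y.PosDef) : (psdSqrt Y).PosDef := by
  have hYs := hY.posSemidef
  rw [psdSqrt_of_posSemidef hYs]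
  have hpsd := hYs.posSemidef_sqrt
  refine posDef_iff_dotProduct_mulVec.mpr ⟨?_, ?_⟩
  · exact hpsd.1
  · intro x hx
    have hstar : star x = x := by funext i; exact star_trivial _
    have h0 := hpsd.dotProduct_mulVec_nonneg x
    rw [hstar] at h0 ⊢
    rcases lt_or_eq_of_le h0 with h | h
    · exact h
    · exfalso
      have hz : hYs.sqrt *ᵥ x = 0 := (hpsd.dotProduct_mulVec_zero_iff x).mp
        (by rw [hstar]; exact h.symm)
      have : Y *ᵥ x = 0 := by
        rw [← hYs.sqrt_mul_self, ← Matrix.mulVec_mulVec, hz, Matrix.mulVec_zero]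
      have h2 := hY.dotProduct_mulVec_pos hx
      rw [hstar, this, dotProduct_zero] at h2
      exact lt_irrefl 0 h2

/-- The Lyapunov operator `H ↦ S*H + H*S` as a continuous linear map. -/
noncomputable def lyapCLM (S : E) : E →L[ℝ] E :=
  LinearMap.toContinuousLinearMap
  { toFun := fun H => S * H + H * S
    map_add' := fun H K => by noncomm_ring
    map_smul' := fun c H => by
      simp [Matrix.mul_smul, Matrix.smul_mul, smul_add] }

/-- The Lyapunov operator at a positive definite `S` as a continuous linear equivalence. -/
noncomputable def lyapEquiv {S : E} (hS : S.PosDef) : E ≃L[ℝ] E :=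
  LinearEquiv.toContinuousLinearEquiv
    (LinearEquiv.ofBijective (lyapCLM S).toLinearMap
      ⟨lyap_inj hS, (LinearMap.injective_iff_surjective).mp (lyap_inj hS)⟩)

lemma lyapEquiv_coe {S : E} (hS : S.PosDef) :
    (lyapEquiv hS : E →L[ℝ] E) = lyapCLM S := by
  ext H
  rfl

lemma contDiff_sq : ContDiff ℝ (⊤ : ℕ∞) (fun S : E => S * S) :=
  contDiff_mul2.comp (contDiff_id.prodMk contDiff_id)

lemma hasFDerivAt_sq (S : E) :
    HasFDerivAt (fun S : E => S * S) (lyapCLM S) S := by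
  have h := (isBBM_mul (n := n)).hasFDerivAt (S, S)
  have h2 : HasFDerivAt (fun S : E => ((S, S) : E × E))
      ((ContinuousLinearMap.id ℝ E).prod (ContinuousLinearMap.id ℝ E)) S :=
    ((ContinuousLinearMap.id ℝ E).prod (ContinuousLinearMap.id ℝ E)).hasFDerivAt
  have h3 : HasFDerivAt ((fun p : E × E => p.1 * p.2) ∘ (fun S : E => (S, S)))
      (((isBBM_mul (n := n)).deriv (S, S)).comp
        ((ContinuousLinearMap.id ℝ E).prod (ContinuousLinearMap.id ℝ E))) S :=
    HasFDerivAt.comp S h h2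
  exact h3.congr_fderiv (ContinuousLinearMap.ext fun H => rfl)

lemma contDiff_ctMap : ContDiff ℝ (⊤ : ℕ∞) (fun X : E => Xᵀ * X) :=
  contDiff_mul2.comp ((transposeCLM.contDiff).prodMk contDiff_id)

theorem contDiffAt_sqrtCT {X₀ : E} (hX : IsUnit X₀.det) :
    ContDiffAt ℝ (⊤ : ℕ∞) (fun X : E => psdSqrt (Xᵀ * X)) X₀ := by
  have hY₀ : (X₀ᵀ * X₀).PosDef := posDef_ctm hX
  have hY₀s : (X₀ᵀ * X₀).PosSemidef := hY₀.posSemidef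
  set S₀ : E := psdSqrt (X₀ᵀ * X₀) with hS₀def
  have hS₀ : S₀.PosDef := psdSqrt_posDef hY₀
  have hsq : S₀ * S₀ = X₀ᵀ * X₀ := by
    rw [hS₀def, psdSqrt_of_posSemidef hY₀s]
    exact hY₀s.sqrt_mul_self
  -- local inverse of the squaring map at S₀
  have hcd : ContDiffAt ℝ (⊤ : ℕ∞) (fun S : E => S * S) S₀ := contDiff_sq.contDiffAt
  have hfd : HasFDerivAt (fun S : E => S * S) ((lyapEquiv hS₀ : E →L[ℝ] E)) S₀ := by
    rw [lyapEquiv_coe]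
    exact hasFDerivAt_sq S₀
  have hst : HasStrictFDerivAt (fun S : E => S * S) ((lyapEquiv hS₀ : E →L[ℝ] E)) S₀ :=
    hcd.hasStrictFDerivAt' hfd (by simp)
  set g : E → E := hst.localInverse _ _ _ with hgdef
  have hg : ContDiffAt ℝ (⊤ : ℕ∞) g (S₀ * S₀) :=
    hcd.to_localInverse hfd (by simp)
  have hrinv : ∀ᶠ Y in nhds (S₀ * S₀), g Y * g Y = Y := hst.eventually_right_inverse
  have hcont : Filter.Tendsto g (nhds (S₀ * S₀)) (nhds S₀) := hst.localInverse_tendsto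
  set ph := hst.toOpenPartialHomeomorph _ with hphdef
  have hopen : IsOpen ph.source := ph.open_source
  have hS₀mem : S₀ ∈ ph.source := hst.mem_toOpenPartialHomeomorph_source
  have hphcoe : ∀ x : E, ph x = x * x := fun x => rfl
  have hgsrc : ∀ᶠ Y in nhds (S₀ * S₀), g Y ∈ ph.source :=
    hcont.eventually (hopen.mem_nhds hS₀mem)
  have hS₀sym : S₀ᵀ = S₀ := by
    have := hS₀.1
    rwa [Matrix.IsHermitian, conjTranspose_eq_transpose_of_trivial] at this
  have hgTsrc : ∀ᶠ Y in nhds (S₀ * S₀), (g Y)ᵀ ∈ ph.source := by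
    have htc : Filter.Tendsto (fun Y => (g Y)ᵀ) (nhds (S₀ * S₀)) (nhds S₀) := by
      have : Continuous fun M : E => Mᵀ := transposeCLM.continuous
      have h2 := (this.tendsto S₀).comp hcont
      rwa [hS₀sym] at h2
    exact htc.eventually (hopen.mem_nhds hS₀mem)
  obtain ⟨ε, hε, hball⟩ := posDef_nearby hS₀
  have hnear : ∀ᶠ Y in nhds (S₀ * S₀), ‖g Y - S₀‖ < ε := by
    have h7 : ∀ᶠ Z in nhds S₀, ‖Z - S₀‖ < ε := by
      filter_upwards [Metric.ball_mem_nhds S₀ hε] with Z hZ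
      simpa [dist_eq_norm] using hZ
    exact hcont.eventually h7
  have hmain : ∀ᶠ Y in nhds (S₀ * S₀), Yᵀ = Y → psdSqrt Y = g Y := by
    filter_upwards [hrinv, hgsrc, hgTsrc, hnear] with Y h1 h2 h3 h4 hYsym
    have hgt : (g Y)ᵀ = g Y := by
      refine ph.injOn h3 h2 ?_
      rw [hphcoe, hphcoe, ← Matrix.transpose_mul]
      rw [h1, hYsym]
    have hgpd : (g Y).PosDef := hball _ hgt h4
    have hYpsd : Y.PosSemidef := by
      have h5 := Matrix.posSemidef_conjTranspose_mul_self (g Y)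
      rw [conjTranspose_eq_transpose_of_trivial, hgt, h1] at h5
      exact h5
    rw [psdSqrt_of_posSemidef hYpsd]
    exact (hgpd.posSemidef.eq_sqrt_of_sq_eq hYpsd (by rw [pow_two, h1])).symm
  have hx_ev : ∀ᶠ X in nhds X₀, psdSqrt (Xᵀ * X) = g (Xᵀ * X) := by
    have hc : Filter.Tendsto (fun X : E => Xᵀ * X) (nhds X₀) (nhds (S₀ * S₀)) := by
      have h6 := (contDiff_ctMap (n := n)).continuous.tendsto X₀
      rwa [← hsq] at h6
    filter_upwards [hc.eventually hmain] with X hX2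
    exact hX2 (by rw [Matrix.transpose_mul, Matrix.transpose_transpose])
  rw [hsq] at hg
  have hcomp : ContDiffAt ℝ (⊤ : ℕ∞) (fun X : E => g (Xᵀ * X)) X₀ :=
    ContDiffAt.comp (f := fun X : E => Xᵀ * X) X₀ hg contDiff_ctMap.contDiffAt
  exact hcomp.congr_of_eventuallyEq hx_ev

lemma contDiffAt_f {X₀ : E} (hX : IsUnit X₀.det) :
    ContDiffAt ℝ (⊤ : ℕ∞) (fun X : E =>
      (n : ℝ) + Matrix.trace (Xᵀ * X) - 2 * Matrix.trace (psdSqrt (Xᵀ * X))) X₀ := by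
  have h1 : ContDiffAt ℝ (⊤ : ℕ∞) (fun X : E => Matrix.trace (Xᵀ * X)) X₀ :=
    (traceCLM.contDiff.comp contDiff_ctMap).contDiffAt
  have h2 : ContDiffAt ℝ (⊤ : ℕ∞) (fun X : E => Matrix.trace (psdSqrt (Xᵀ * X))) X₀ :=
    ContDiffAt.comp (g := fun M : E => Matrix.trace M)
      (f := fun X : E => psdSqrt (Xᵀ * X)) X₀
      traceCLM.contDiff.contDiffAt (contDiffAt_sqrtCT hX)
  exact (contDiffAt_const.add h1).sub (contDiffAt_const.mul h2)

lemma posDef_one' : (1 : E).PosDef := by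
  refine posDef_iff_dotProduct_mulVec.mpr ⟨?_, ?_⟩
  · exact isHermitian_one
  · intro x hx
    have hstar : star x = x := funext fun i => star_trivial _
    rw [hstar, Matrix.one_mulVec]
    exact dot_self_pos hx

lemma one_add_smul_posDef_ev {W : E} (hW : Wᵀ = W) :
    ∀ᶠ t : ℝ in nhds 0, ((1 : E) + t • W).PosDef := by
  obtain ⟨ε, hε, hball⟩ := posDef_nearby (posDef_one' (n := n))
  have hcont : Continuous fun t : ℝ => (1 : E) + t • W :=
    continuous_const.add (continuous_id.smul continuous_const)
  have h0 : Filter.Tendsto (fun t : ℝ => (1 : E) + t • W) (nhds 0) (nhds 1) := by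
    have := hcont.tendsto 0
    simpa using this
  have h7 : ∀ᶠ Z : E in nhds 1, ‖Z - 1‖ < ε := by
    filter_upwards [Metric.ball_mem_nhds (1 : E) hε] with Z hZ
    simpa [dist_eq_norm] using hZ
  filter_upwards [h0.eventually h7] with t ht
  refine hball _ ?_ ht
  rw [Matrix.transpose_add, Matrix.transpose_one, Matrix.transpose_smul, hW]

lemma key_line {A : E} (hA : Aᵀ * A = 1) {W : E} (hW : Wᵀ = W) {t : ℝ}
    (hP : ((1 : E) + t • W).PosDef) :
    (n : ℝ) + Matrix.trace ((A + t • (A * W))ᵀ * (A + t • (A * W)))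
      - 2 * Matrix.trace (psdSqrt ((A + t • (A * W))ᵀ * (A + t • (A * W))))
      = t ^ 2 * Matrix.trace (W * W) := by
  set P : E := 1 + t • W with hPdef
  have hPsym : Pᵀ = P := by
    rw [hPdef, Matrix.transpose_add, Matrix.transpose_one, Matrix.transpose_smul, hW]
  have hXP : A + t • (A * W) = A * P := by
    rw [hPdef, Matrix.mul_add, Matrix.mul_one, Matrix.mul_smul]
  have hct : (A * P)ᵀ * (A * P) = P * P := by
    rw [Matrix.transpose_mul, Matrix.mul_assoc, ← Matrix.mul_assoc Aᵀ A P, hA,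
      Matrix.one_mul, hPsym]
  have hppsd : (P * P).PosSemidef := by
    have h5 := Matrix.posSemidef_conjTranspose_mul_self P
    rwa [conjTranspose_eq_transpose_of_trivial, hPsym] at h5
  have hsqrt : psdSqrt (P * P) = P := by
    rw [psdSqrt_of_posSemidef hppsd]
    exact (hP.posSemidef.eq_sqrt_of_sq_eq hppsd (by rw [pow_two])).symm
  have hPP : P * P = 1 + t • W + t • W + (t * t) • (W * W) := by
    rw [hPdef]
    simp only [Matrix.add_mul, Matrix.mul_add, Matrix.one_mul, Matrix.mul_one,
      Matrix.smul_mul, Matrix.mul_smul, smul_smul, smul_add]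
    abel
  have htr1 : Matrix.trace (P * P)
      = (n : ℝ) + t * Matrix.trace W + t * Matrix.trace W + (t * t) * Matrix.trace (W * W) := by
    rw [hPP]
    simp [Matrix.trace_add, Matrix.trace_smul, Matrix.trace_one, smul_eq_mul]
  have htr2 : Matrix.trace P = (n : ℝ) + t * Matrix.trace W := by
    rw [hPdef]
    simp [Matrix.trace_add, Matrix.trace_smul, Matrix.trace_one, smul_eq_mul]
  rw [hXP, hct, hsqrt, htr1, htr2]
  ring

/-- The squared Frobenius distance to the orthogonal group. -/
noncomputable def fF : E → ℝ := fun X =>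
  (n : ℝ) + Matrix.trace (Xᵀ * X) - 2 * Matrix.trace (psdSqrt (Xᵀ * X))

lemma contDiffAt_fF {X₀ : E} (hX : IsUnit X₀.det) : ContDiffAt ℝ (⊤ : ℕ∞) (fF (n := n)) X₀ :=
  contDiffAt_f hX

lemma isUnit_det_of_orth {A : E} (hA : Aᵀ * A = 1) : IsUnit A.det := by
  have h1 := congrArg Matrix.det hA
  rw [Matrix.det_mul, Matrix.det_one, Matrix.det_transpose] at h1
  exact IsUnit.of_mul_eq_one _ h1

lemma hessian_diag {A : E} (hA : Aᵀ * A = 1) {V : E} (hV : Vᵀ = V) :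
    fderiv ℝ (fderiv ℝ (fF (n := n))) A (A * V) (A * V)
      = 2 * Matrix.trace (V * V) := by
  letI : NormedAddCommGroup (E →L[ℝ] ℝ) := ContinuousLinearMap.toNormedAddCommGroup
  letI : NormedSpace ℝ (E →L[ℝ] ℝ) := ContinuousLinearMap.toNormedSpace
  have hAu : IsUnit A.det := isUnit_det_of_orth hA
  set v : E := A * V with hvdef
  set γ : ℝ → E := fun t => A + t • v with hγ
  have hγ0 : γ 0 = A := by simp [hγ]
  have hγd : ∀ t : ℝ, HasDerivAt γ v t := by
    intro t
    have h := ((hasDerivAt_id t).smul_const v).const_add A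
    rwa [one_smul] at h
  have hIU : ∀ᶠ t : ℝ in nhds 0, IsUnit (γ t).det ∧ ((1 : E) + t • V).PosDef := by
    filter_upwards [one_add_smul_posDef_ev hV] with t ht
    refine ⟨?_, ht⟩
    have hXP : γ t = A * (1 + t • V) := by
      rw [hγ]
      rw [Matrix.mul_add, Matrix.mul_one, Matrix.mul_smul]
    rw [hXP, Matrix.det_mul]
    exact hAu.mul (isUnit_iff_ne_zero.mpr ht.det_pos.ne')
  have hline : ∀ᶠ t : ℝ in nhds 0, fF (γ t) = t ^ 2 * Matrix.trace (V * V) := by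
    filter_upwards [hIU] with t ht
    exact key_line hA hV ht.2
  have hψ : ∀ᶠ t : ℝ in nhds 0,
      fderiv ℝ fF (γ t) v = 2 * Matrix.trace (V * V) * t := by
    filter_upwards [hIU, eventually_eventually_nhds.mpr hline] with t ht hev
    have hdiff : DifferentiableAt ℝ (fF (n := n)) (γ t) :=
      (contDiffAt_fF ht.1).differentiableAt (by simp)
    have hcomp : HasDerivAt (fun s => fF (γ s)) (fderiv ℝ fF (γ t) v) t :=
      hdiff.hasFDerivAt.comp_hasDerivAt t (hγd t)
    have hpoly : HasDerivAt (fun s : ℝ => s ^ 2 * Matrix.trace (V * V))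
        ((2 * t ^ 1) * Matrix.trace (V * V)) t := by
      have := (hasDerivAt_pow 2 t).mul_const (Matrix.trace (V * V))
      simpa using this
    have hcomp2 : HasDerivAt (fun s => fF (γ s))
        ((2 * t ^ 1) * Matrix.trace (V * V)) t :=
      hpoly.congr_of_eventuallyEq hev
    have h8 := hcomp.unique hcomp2
    rw [h8]
    ring
  have hdf : DifferentiableAt ℝ (fderiv ℝ (fF (n := n))) A := by
    have h9 : ContDiffAt ℝ 1 (fderiv ℝ (fF (n := n))) A :=
      (contDiffAt_fF hAu).fderiv_right (m := 1) (WithTop.coe_le_coe.mpr le_top)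
    exact h9.differentiableAt one_ne_zero
  have h1 : HasDerivAt (fun t => fderiv ℝ fF (γ t))
      (fderiv ℝ (fderiv ℝ fF) A v) 0 := by
    have h0 := hdf.hasFDerivAt
    rw [← hγ0] at h0
    have h0' := h0.comp_hasDerivAt 0 (hγd 0)
    rwa [hγ0] at h0'
  have h2 : HasDerivAt (fun t => fderiv ℝ fF (γ t) v)
      (fderiv ℝ (fderiv ℝ fF) A v v) 0 :=
    (ContinuousLinearMap.apply ℝ ℝ v).hasFDerivAt.comp_hasDerivAt 0 h1
  have h4 : HasDerivAt (fun t : ℝ => 2 * Matrix.trace (V * V) * t)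
      (2 * Matrix.trace (V * V)) 0 := by
    simpa using (hasDerivAt_id (0 : ℝ)).const_mul (2 * Matrix.trace (V * V))
  have h5 : HasDerivAt (fun t => fderiv ℝ fF (γ t) v)
      (2 * Matrix.trace (V * V)) 0 :=
    h4.congr_of_eventuallyEq hψ
  exact h2.unique h5

theorem hessian_main {A : E} (hA : Aᵀ * A = 1) (W W' : E) (hW : Wᵀ = W) (hW' : W'ᵀ = W') :
    fderiv ℝ (fderiv ℝ (fF (n := n))) A (A * W) (A * W')
      = 2 * Matrix.trace ((A * W)ᵀ * (A * W')) := by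
  have hAu : IsUnit A.det := isUnit_det_of_orth hA
  have hsym : ∀ vv ww, fderiv ℝ (fderiv ℝ (fF (n := n))) A vv ww
      = fderiv ℝ (fderiv ℝ (fF (n := n))) A ww vv :=
    (contDiffAt_fF hAu).isSymmSndFDerivAt (by
      rw [minSmoothness_of_isRCLikeNormedField]; exact WithTop.coe_le_coe.mpr le_top)
  have h1 := hessian_diag hA hW
  have h2 := hessian_diag hA hW'
  have h3 := hessian_diag hA (V := W + W') (by rw [Matrix.transpose_add, hW, hW'])
  rw [Matrix.mul_add] at h3
  simp only [map_add, ContinuousLinearMap.add_apply] at h3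
  have hcross : Matrix.trace ((W + W') * (W + W'))
      = Matrix.trace (W * W) + 2 * Matrix.trace (W * W') + Matrix.trace (W' * W') := by
    rw [Matrix.mul_add, Matrix.add_mul, Matrix.add_mul, Matrix.trace_add, Matrix.trace_add,
      Matrix.trace_add, Matrix.trace_mul_comm W' W]
    ring
  rw [hcross] at h3
  have hBsym := hsym (A * W) (A * W')
  have hgoal2 : fderiv ℝ (fderiv ℝ (fF (n := n))) A (A * W) (A * W')
      = 2 * Matrix.trace (W * W') := by linarith
  have hct : (A * W)ᵀ * (A * W') = W * W' := by
    rw [Matrix.transpose_mul, Matrix.mul_assoc, ← Matrix.mul_assoc Aᵀ A W', hA,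
      Matrix.one_mul, hW]
  rw [hct]
  exact hgoal2

/-- Let f(A) = n + tr(AᵀA) − 2·tr(√(AᵀA)) be the squared Frobenius distance to
O(n,ℝ).  Then f is smooth on the invertible matrices, and for every A ∈ O(n,ℝ) and all
symmetric W, W′, the Hessian of f at A on the pair of normal directions (AW, AW′) equals
2·tr((AW)ᵀ(AW′)), i.e. twice the Frobenius inner product. -/
theorem hessian_dist_squared_on_normal_directions {n : ℕ} :
    letI f : Matrix (Fin n) (Fin n) ℝ → ℝ := fun X =>
      (n : ℝ) + Matrix.trace (Xᵀ * X) - 2 * Matrix.trace (psdSqrt (Xᵀ * X))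
    ContDiffOn ℝ (⊤ : ℕ∞) f {X : Matrix (Fin n) (Fin n) ℝ | IsUnit X.det} ∧
    ∀ A : Matrix (Fin n) (Fin n) ℝ, Aᵀ * A = 1 →
      ∀ W W' : Matrix (Fin n) (Fin n) ℝ, Wᵀ = W → W'ᵀ = W' →
        fderiv ℝ (fderiv ℝ f) A (A * W) (A * W') =
          2 * Matrix.trace ((A * W)ᵀ * (A * W')) := by
  exact ⟨fun X hX => (contDiffAt_f hX).contDiffWithinAt,
    fun A hA W W' hW hW' => hessian_main hA W W' hW hW'⟩
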